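/- arXiv:1907.05976 — 6 statements merged into one kernel-verified Lean document; each statement's English description precedes it below -/
import Mathlib

section
/- The entropy variables contract the time derivative of the conservative variables to the time derivative of the entropy: for smooth ρ, u, v, w, p, one has w^T q_t = E_t where w = (-(1/2)(u²+v²+w²), u, v, w, M₀²p), q = (ρ, ρu, ρv, ρw, p), and E = (1/2)ρ(u²+v²+w²) + (1/2)M₀²p². -/
/-! By the product rule, `u (ρ u)' - (u²/2) ρ' = (ρ u²/2)'` for each velocity component `u`,
and `M₀² p p' = (M₀² p²/2)'`; summing these rates gives `E'`. -/

theorem hasDerivAt_mul_sq_div_two {ρ u : ℝ → ℝ} {t : ℝ}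
    (hρ : DifferentiableAt ℝ ρ t) (hu : DifferentiableAt ℝ u t) :
    HasDerivAt (fun s => ρ s * u s ^ 2 / 2)
      (u t * deriv (fun s => ρ s * u s) t - u t ^ 2 / 2 * deriv ρ t) t := by
  refine ((hρ.hasDerivAt.mul (hu.hasDerivAt.fun_pow 2)).div_const 2).congr_deriv ?_
  rw [deriv_fun_mul hρ hu]
  ring

theorem entropy_time_contraction (ρ u v w p : ℝ → ℝ) (M₀ : ℝ)
    (hρ : Differentiable ℝ ρ) (hu : Differentiable ℝ u)
    (hv : Differentiable ℝ v) (hw : Differentiable ℝ w)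
    (hp : Differentiable ℝ p) (t : ℝ) :
    (-(1 / 2) * ((u t) ^ 2 + (v t) ^ 2 + (w t) ^ 2)) * deriv ρ t
      + u t * deriv (fun s => ρ s * u s) t
      + v t * deriv (fun s => ρ s * v s) t
      + w t * deriv (fun s => ρ s * w s) t
      + M₀ ^ 2 * p t * deriv p t =
    deriv (fun s =>
      (1 / 2) * ρ s * ((u s) ^ 2 + (v s) ^ 2 + (w s) ^ 2)
        + (1 / 2) * M₀ ^ 2 * (p s) ^ 2) t := by
  have hkinetic := ((hasDerivAt_mul_sq_div_two (hρ t) (hu t)).add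
    (hasDerivAt_mul_sq_div_two (hρ t) (hv t))).add (hasDerivAt_mul_sq_div_two (hρ t) (hw t))
  have hpressure := ((hp t).hasDerivAt.fun_pow 2).const_mul (M₀ ^ 2 / 2)
  symm
  convert (hkinetic.add hpressure).deriv using 1
  · congr 1
    funext s
    simp only [Pi.add_apply]
    ring
  · norm_num
    ring
end

section
/- The entropy variables contract the x-component of the inviscid flux: for smooth functions ρ, u, v, w, p of x, with entropy variables W = (-(1/2)(u²+v²+w²), u, v, w, M₀²p) and flux f = (ρu, ρu²+p, ρuv, ρuw, u/M₀²), one has W^T (df/dx) = d/dx [((1/2)ρ(u²+v²+w²) + p) u], provided M₀ ≠ 0. -/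
theorem entropy_variables_dot_flux_differential {M₀ : ℝ} (hM : M₀ ≠ 0)
    (ρ u v w p ρ' u' v' w' p' : ℝ) :
    -(1 / 2) * (u ^ 2 + v ^ 2 + w ^ 2) * (ρ' * u + ρ * u')
      + u * (ρ' * u ^ 2 + ρ * (2 * u * u') + p')
      + v * ((ρ' * u + ρ * u') * v + ρ * u * v')
      + w * ((ρ' * u + ρ * u') * w + ρ * u * w')
      + M₀ ^ 2 * p * (u' / M₀ ^ 2) =
    (1 / 2 * ρ' * (u ^ 2 + v ^ 2 + w ^ 2)
        + 1 / 2 * ρ * (2 * u * u' + 2 * v * v' + 2 * w * w') + p') * u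
      + (1 / 2 * ρ * (u ^ 2 + v ^ 2 + w ^ 2) + p) * u' := by
  field_simp
  ring

theorem inviscid_flux_entropy_contraction (ρ u v w p : ℝ → ℝ) (M₀ : ℝ)
    (hM : M₀ ≠ 0)
    (hρ : Differentiable ℝ ρ) (hu : Differentiable ℝ u)
    (hv : Differentiable ℝ v) (hw : Differentiable ℝ w)
    (hp : Differentiable ℝ p) (x : ℝ) :
    (-(1 / 2) * ((u x) ^ 2 + (v x) ^ 2 + (w x) ^ 2))
        * deriv (fun s => ρ s * u s) x
      + u x * deriv (fun s => ρ s * (u s) ^ 2 + p s) x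
      + v x * deriv (fun s => ρ s * u s * v s) x
      + w x * deriv (fun s => ρ s * u s * w s) x
      + M₀ ^ 2 * p x * deriv (fun s => u s / M₀ ^ 2) x =
    deriv (fun s =>
      ((1 / 2) * ρ s * ((u s) ^ 2 + (v s) ^ 2 + (w s) ^ 2) + p s) * u s) x := by
  have hρ' := (hρ x).hasDerivAt
  have hu' := (hu x).hasDerivAt
  have hv' := (hv x).hasDerivAt
  have hw' := (hw x).hasDerivAt
  have hp' := (hp x).hasDerivAt
  rw [(hρ'.fun_mul hu').deriv, ((hρ'.fun_mul (hu'.fun_pow 2)).fun_add hp').deriv,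
    ((hρ'.fun_mul hu').fun_mul hv').deriv, ((hρ'.fun_mul hu').fun_mul hw').deriv,
    (hu'.div_const _).deriv,
    ((((hρ'.const_mul _).fun_mul (((hu'.fun_pow 2).fun_add (hv'.fun_pow 2)).fun_add
      (hw'.fun_pow 2))).fun_add hp').fun_mul hu').deriv]
  -- the product rule leaves `↑2 * u x ^ (2 - 1)` where the identity has `2 * u x`, hence `ring`
  linear_combination entropy_variables_dot_flux_differential hM (ρ x) (u x) (v x) (w x) (p x)
    (deriv ρ x) (deriv u x) (deriv v x) (deriv w x) (deriv p x)
end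

section
/- The two-point flux F^ec of the incompressible NSE with artificial compressibility satisfies Tadmor's entropy conservation (shuffle) condition in the x-direction: for any two states (ρ_L, u_L, v_L, w_L, P_L) and (ρ_R, u_R, v_R, w_R, P_R), with [[·]] and {{·}} the jump and average operators, and either choice of momentum average (ρ̃u = {{ρu}} or ρ̃u = {{ρ}}{{u}}), one has [[W]]ᵀ F^ec − [[WᵀF]] + [[F^E]] = 0, where W = (-(1/2)(u²+v²+w²), u, v, w, M₀²P), F = (ρu, ρu²+P, ρuv, ρuw, u/M₀²), F^ec = (ρ̃u, ρ̃u{{u}}+{{P}}, ρ̃u{{v}}, ρ̃u{{w}}, {{u}}/M₀²), and F^E = ((1/2)ρ(u²+v²+w²)+P)u, provided M₀ ≠ 0. -/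
theorem tadmor_shuffle_condition_general
    (M₀ ρL uL vL wL PL ρR uR vR wR PR ρu : ℝ) (hM : M₀ ≠ 0) :
    ((-(1 / 2) * (uR ^ 2 + vR ^ 2 + wR ^ 2))
        - (-(1 / 2) * (uL ^ 2 + vL ^ 2 + wL ^ 2))) * ρu
      + (uR - uL) * (ρu * ((uL + uR) / 2) + (PL + PR) / 2)
      + (vR - vL) * (ρu * ((vL + vR) / 2))
      + (wR - wL) * (ρu * ((wL + wR) / 2))
      + (M₀ ^ 2 * PR - M₀ ^ 2 * PL) * (((uL + uR) / 2) / M₀ ^ 2)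
    - (((-(1 / 2) * (uR ^ 2 + vR ^ 2 + wR ^ 2)) * (ρR * uR)
        + uR * (ρR * uR ^ 2 + PR) + vR * (ρR * uR * vR) + wR * (ρR * uR * wR)
        + M₀ ^ 2 * PR * (uR / M₀ ^ 2))
      - ((-(1 / 2) * (uL ^ 2 + vL ^ 2 + wL ^ 2)) * (ρL * uL)
        + uL * (ρL * uL ^ 2 + PL) + vL * (ρL * uL * vL) + wL * (ρL * uL * wL)
        + M₀ ^ 2 * PL * (uL / M₀ ^ 2)))
    + (((1 / 2) * ρR * (uR ^ 2 + vR ^ 2 + wR ^ 2) + PR) * uR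
      - ((1 / 2) * ρL * (uL ^ 2 + vL ^ 2 + wL ^ 2) + PL) * uL) = 0 := by
  field_simp
  -- `ρu` cancels whatever it is, as `[[(u² + v² + w²)/2]] = [[u]]{{u}} + [[v]]{{v}} + [[w]]{{w}}`;
  -- the pressure terms cancel by the product rule `[[P u]] = [[P]]{{u}} + {{P}}[[u]]`.
  ring

theorem tadmor_shuffle_condition
    (M₀ ρL uL vL wL PL ρR uR vR wR PR ρu : ℝ) (hM : M₀ ≠ 0)
    (hρu : ρu = (ρL * uL + ρR * uR) / 2
         ∨ ρu = ((ρL + ρR) / 2) * ((uL + uR) / 2)) :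
    ((-(1 / 2) * (uR ^ 2 + vR ^ 2 + wR ^ 2))
        - (-(1 / 2) * (uL ^ 2 + vL ^ 2 + wL ^ 2))) * ρu
      + (uR - uL) * (ρu * ((uL + uR) / 2) + (PL + PR) / 2)
      + (vR - vL) * (ρu * ((vL + vR) / 2))
      + (wR - wL) * (ρu * ((wL + wR) / 2))
      + (M₀ ^ 2 * PR - M₀ ^ 2 * PL) * (((uL + uR) / 2) / M₀ ^ 2)
    - (((-(1 / 2) * (uR ^ 2 + vR ^ 2 + wR ^ 2)) * (ρR * uR)
        + uR * (ρR * uR ^ 2 + PR) + vR * (ρR * uR * vR) + wR * (ρR * uR * wR)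
        + M₀ ^ 2 * PR * (uR / M₀ ^ 2))
      - ((-(1 / 2) * (uL ^ 2 + vL ^ 2 + wL ^ 2)) * (ρL * uL)
        + uL * (ρL * uL ^ 2 + PL) + vL * (ρL * uL * vL) + wL * (ρL * uL * wL)
        + M₀ ^ 2 * PL * (uL / M₀ ^ 2)))
    + (((1 / 2) * ρR * (uR ^ 2 + vR ^ 2 + wR ^ 2) + PR) * uR
      - ((1 / 2) * ρL * (uL ^ 2 + vL ^ 2 + wL ^ 2) + PL) * uL) = 0 :=
  tadmor_shuffle_condition_general M₀ ρL uL vL wL PL ρR uR vR wR PR ρu hM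
end

section
/- Direct prescription of the wall numerical flux yields exactly zero entropy production: for any state (ρ, u, v, w, P) and unit normal n, setting the wall flux to F* = (0, Pn, 0), the quantity Δ_e = Wᵀ(F* − F·n) + F^E·n equals zero, where W are the entropy variables, F·n the normal inviscid flux, and F^E the entropy flux. -/
theorem wall_flux_zero_entropy_production_general
    (ρ u v w P M₀ n₁ n₂ n₃ : ℝ) (hM : M₀ ≠ 0) :
    (-(1 / 2) * (u ^ 2 + v ^ 2 + w ^ 2))
        * (0 - ρ * (u * n₁ + v * n₂ + w * n₃))
      + u * (P * n₁ - (ρ * (u * n₁ + v * n₂ + w * n₃) * u + P * n₁))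
      + v * (P * n₂ - (ρ * (u * n₁ + v * n₂ + w * n₃) * v + P * n₂))
      + w * (P * n₃ - (ρ * (u * n₁ + v * n₂ + w * n₃) * w + P * n₃))
      + M₀ ^ 2 * P * (0 - (u * n₁ + v * n₂ + w * n₃) / M₀ ^ 2)
      + ((1 / 2) * ρ * (u ^ 2 + v ^ 2 + w ^ 2) + P)
          * (u * n₁ + v * n₂ + w * n₃) = 0 := by
  have pressure_term :
      M₀ ^ 2 * P * (0 - (u * n₁ + v * n₂ + w * n₃) / M₀ ^ 2)
        = -(P * (u * n₁ + v * n₂ + w * n₃)) := by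
    field_simp
    ring
  -- The mass and momentum rows give -(1/2) ρ V_tot² U_n, cancelling the kinetic part of the
  -- entropy flux; the pressure row gives -P U_n, cancelling the rest.
  linear_combination pressure_term

theorem wall_flux_zero_entropy_production
    (ρ u v w P M₀ n₁ n₂ n₃ : ℝ) (hM : M₀ ≠ 0)
    (hn : n₁ ^ 2 + n₂ ^ 2 + n₃ ^ 2 = 1) :
    (-(1 / 2) * (u ^ 2 + v ^ 2 + w ^ 2))
        * (0 - ρ * (u * n₁ + v * n₂ + w * n₃))
      + u * (P * n₁ - (ρ * (u * n₁ + v * n₂ + w * n₃) * u + P * n₁))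
      + v * (P * n₂ - (ρ * (u * n₁ + v * n₂ + w * n₃) * v + P * n₂))
      + w * (P * n₃ - (ρ * (u * n₁ + v * n₂ + w * n₃) * w + P * n₃))
      + M₀ ^ 2 * P * (0 - (u * n₁ + v * n₂ + w * n₃) / M₀ ^ 2)
      + ((1 / 2) * ρ * (u ^ 2 + v ^ 2 + w ^ 2) + P)
          * (u * n₁ + v * n₂ + w * n₃) = 0 :=
  wall_flux_zero_entropy_production_general ρ u v w P M₀ n₁ n₂ n₃ hM
end

section
/- The exact Riemann solver applied at a wall with the mirrored external state is dissipative: with interior state having normal velocity U_n, density ρ > 0, pressure P, tangential velocities V_t1, V_t2, and exterior state obtained by flipping the sign of U_n, the star solution has U_n* = 0 and P* = P + ρλ⁺U_n with λ⁺ = (U_n + a)/2, a = sqrt(U_n² + 4/(M₀²ρ)); the resulting entropy production Δ_e = Wᵀ(F(Q*) − F(Q)) + F^E equals ρλ⁺U_n² ≥ 0. -/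
/-!
At the wall the star state has no normal velocity, so the only flux component that survives
the jump `F(Q*) - F(Q)` against the entropy variables is the pressure increment `ρ λ⁺ Uₙ` in
the normal momentum; all remaining terms cancel against the entropy flux. Since
`a = √(Uₙ² + 4/(M₀²ρ)) ≥ |Uₙ|`, the wave speed `λ⁺ = (Uₙ + a)/2` is nonnegative.
-/

theorem add_sqrt_sq_add_nonneg (u : ℝ) {c : ℝ} (hc : 0 ≤ c) : 0 ≤ u + √(u ^ 2 + c) := by
  have := Real.abs_le_sqrt (le_add_of_nonneg_right hc : u ^ 2 ≤ u ^ 2 + c)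
  linarith [neg_abs_le u]

theorem wall_entropy_production_eq (ρ Un Vt1 Vt2 P M₀ lp : ℝ) (hM : M₀ ≠ 0) :
    (-(1 / 2) * (Un ^ 2 + Vt1 ^ 2 + Vt2 ^ 2)) * (0 - ρ * Un)
      + Un * ((P + ρ * lp * Un) - (ρ * Un ^ 2 + P))
      + Vt1 * (0 - ρ * Un * Vt1)
      + Vt2 * (0 - ρ * Un * Vt2)
      + M₀ ^ 2 * P * (0 - Un / M₀ ^ 2)
      + ((1 / 2) * ρ * (Un ^ 2 + Vt1 ^ 2 + Vt2 ^ 2) + P) * Un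
      = ρ * lp * Un ^ 2 := by
  field_simp
  ring

theorem wall_riemann_dissipative (ρ Un Vt1 Vt2 P M₀ : ℝ)
    (hρ : 0 < ρ) (hM : M₀ ≠ 0) :
    let a := Real.sqrt (Un ^ 2 + 4 / (M₀ ^ 2 * ρ))
    let lp := (Un + a) / 2
    (-(1 / 2) * (Un ^ 2 + Vt1 ^ 2 + Vt2 ^ 2)) * (0 - ρ * Un)
      + Un * ((P + ρ * lp * Un) - (ρ * Un ^ 2 + P))
      + Vt1 * (0 - ρ * Un * Vt1)
      + Vt2 * (0 - ρ * Un * Vt2)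
      + M₀ ^ 2 * P * (0 - Un / M₀ ^ 2)
      + ((1 / 2) * ρ * (Un ^ 2 + Vt1 ^ 2 + Vt2 ^ 2) + P) * Un
      = ρ * lp * Un ^ 2
    ∧ 0 ≤ ρ * lp * Un ^ 2 := by
  intro a lp
  have hlp : 0 ≤ lp := div_nonneg (add_sqrt_sq_add_nonneg Un (by positivity)) zero_le_two
  exact ⟨wall_entropy_production_eq ρ Un Vt1 Vt2 P M₀ lp hM, by positivity⟩
end

section
/- The entropy production of the exact Riemann solver at an interior face with U_n* ≥ 0 equals Δ_e = 1/(U_n* − λ_L⁻) · [ (1/2)ρ_L λ_L⁺ (U_n* − 2λ_L⁻)(U_{nL} − U_n*)² + ((1/2)ρ_L λ_L⁺ U_n* − ρ_R λ_R⁻ (U_n* − λ_L⁻))(U_{nR} − U_n*)² + (1/2)ρ_L λ_L⁺ U_n* ([[V_t1]]² + [[V_t2]]²) ] and is nonnegative, given λ_L⁺ > 0, λ_L⁻ < 0, λ_R⁻ < 0, ρ_L, ρ_R > 0 and 0 ≤ U_n*. -/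
theorem interior_face_entropy_production_nonneg
    (ρL ρR lLp lLm lRm Uns UnL UnR jV1 jV2 : ℝ)
    (hρL : 0 < ρL) (hρR : 0 < ρR) (hlLp : 0 < lLp) (hlLm : lLm < 0)
    (hlRm : lRm < 0) (hUns : 0 ≤ Uns) :
    0 ≤ (1 / (Uns - lLm)) *
      ((1 / 2) * ρL * lLp * (Uns - 2 * lLm) * (UnL - Uns) ^ 2
        + ((1 / 2) * ρL * lLp * Uns - ρR * lRm * (Uns - lLm))
            * (UnR - Uns) ^ 2
        + (1 / 2) * ρL * lLp * Uns * (jV1 ^ 2 + jV2 ^ 2)) := by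
  have hgap : 0 < Uns - lLm := by linarith
  have hleft : 0 ≤ (1 / 2) * ρL * lLp := by positivity
  have hright : 0 ≤ -(ρR * lRm) := neg_nonneg.mpr (mul_nonpos_of_nonneg_of_nonpos hρR.le hlRm.le)
  have hcoefL : 0 ≤ (1 / 2) * ρL * lLp * (Uns - 2 * lLm) := mul_nonneg hleft (by linarith)
  have hcoefT : 0 ≤ (1 / 2) * ρL * lLp * Uns := mul_nonneg hleft hUns
  have hcoefR : 0 ≤ (1 / 2) * ρL * lLp * Uns - ρR * lRm * (Uns - lLm) := by
    linarith [mul_nonneg hright hgap.le]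
  refine mul_nonneg (one_div_pos.mpr hgap).le ?_
  exact add_nonneg (add_nonneg (mul_nonneg hcoefL (sq_nonneg _)) (mul_nonneg hcoefR (sq_nonneg _)))
    (mul_nonneg hcoefT (by positivity))
end
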